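/- For every v = (n, D, s) ∈ M = ℝ × L × ℝ one has Δ(Φ(v)) = Δ(v) − e·n² + e·⟨f,D⟩². -/
import Mathlib


/-- Cohomological relative Fourier–Mukai transform `Φ` on `M = ℝ × L × ℝ`. -/
noncomputable def PhiFM {L : Type*} [AddCommGroup L] [Module ℝ L] (e : ℝ)
    (B : L →ₗ[ℝ] L →ₗ[ℝ] ℝ) (Θ f : L) (v : ℝ × L × ℝ) : ℝ × L × ℝ :=
  (B f v.2.1,
    -v.2.1 + (B f v.2.1 - v.1) • Θ +
      (B Θ v.2.1 + e / 2 * B f v.2.1 + v.2.2) • f,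
    -(B Θ v.2.1 + e * B f v.2.1 - e / 2 * v.1))

/-- The discriminant `Δ(n,D,s) = ⟨D,D⟩ − 2ns`. -/
noncomputable def DeltaD {L : Type*} [AddCommGroup L] [Module ℝ L]
    (B : L →ₗ[ℝ] L →ₗ[ℝ] ℝ) (v : ℝ × L × ℝ) : ℝ :=
  B v.2.1 v.2.1 - 2 * v.1 * v.2.2

theorem stmt8 (e : ℝ) {L : Type*} [AddCommGroup L] [Module ℝ L]
    (B : L →ₗ[ℝ] L →ₗ[ℝ] ℝ) (hsymm : ∀ x y : L, B x y = B y x)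
    (Θ f : L) (hΘΘ : B Θ Θ = -e) (hΘf : B Θ f = 1) (hff : B f f = 0) :
    ∀ v : ℝ × L × ℝ,
      DeltaD B (PhiFM e B Θ f v) =
        DeltaD B v - e * v.1 ^ 2 + e * (B f v.2.1) ^ 2 := by
  rintro ⟨n, D, s⟩
  have hfΘ : B f Θ = 1 := by rw [← hsymm, hΘf]
  have hDf : B D f = B f D := hsymm D f
  have hDΘ : B D Θ = B Θ D := hsymm D Θ
  simp only [DeltaD, PhiFM, map_add, map_smul, map_neg, LinearMap.add_apply,
    LinearMap.smul_apply, LinearMap.neg_apply, smul_eq_mul, hΘΘ, hΘf, hff, hfΘ, hDf, hDΘ]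
  ring
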